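/- Let a, b ∈ ℝ³ be unit vectors with a × b ≠ 0, and let t ∈ ℝ³ with a × t ≠ 0 and b × t ≠ 0. Suppose the two rays intersect: there exist λ₀ > 0 and λ₁ > 0 with t + λ₀·a = λ₁·b. Then the inverse-depth-weighted midpoint recovers the intersection point: (‖a × t‖/(‖a × t‖ + ‖b × t‖)) · (t + (‖b × t‖/‖a × b‖)·(a + b)) = λ₁·b. -/

import Mathlib

open scoped RealInnerProductSpace
open Matrix

abbrev E3 := EuclideanSpace ℝ (Fin 3)

/-- Cross product on `EuclideanSpace ℝ (Fin 3)`. -/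
noncomputable def cross3 (a b : E3) : E3 :=
  (WithLp.equiv 2 (Fin 3 → ℝ)).symm
    (crossProduct ((WithLp.equiv 2 (Fin 3 → ℝ)) a) ((WithLp.equiv 2 (Fin 3 → ℝ)) b))

/-!
Writing `t = l₁ • b - l₀ • a`, bilinearity and `a × a = b × b = 0` give `a × t = l₁ • (a × b)` and
`b × t = l₀ • (a × b)`. The weight is thus `l₁ / (l₀ + l₁)`, the factor in front of `a + b` is `l₀`,
and `t + l₀ • (a + b) = (l₀ + l₁) • b`.
-/

lemma cross3_smul_right (a u : E3) (x : ℝ) : cross3 a (x • u) = x • cross3 a u := by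
  simp [cross3, WithLp.equiv_symm_apply]

lemma cross3_sub_right (a u v : E3) : cross3 a (u - v) = cross3 a u - cross3 a v := by
  simp [cross3, WithLp.equiv_symm_apply]

lemma cross3_self (a : E3) : cross3 a a = 0 := by
  simp [cross3]

lemma cross3_anticomm (a b : E3) : cross3 a b = -cross3 b a := by
  rw [cross3, cross3, ← cross_anticomm, WithLp.equiv_symm_apply, WithLp.toLp_neg]

section IntersectingRays

variable {a b t : E3} {l₀ l₁ : ℝ}

lemma cross3_left_of_add_smul_eq (hint : t + l₀ • a = l₁ • b) :
    cross3 a t = l₁ • cross3 a b := by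
  rw [eq_sub_of_add_eq hint, cross3_sub_right, cross3_smul_right, cross3_smul_right,
    cross3_self, smul_zero, sub_zero]

lemma cross3_right_of_add_smul_eq (hint : t + l₀ • a = l₁ • b) :
    cross3 b t = l₀ • cross3 a b := by
  rw [eq_sub_of_add_eq hint, cross3_sub_right, cross3_smul_right, cross3_smul_right,
    cross3_self, cross3_anticomm b a, smul_zero, zero_sub, smul_neg, neg_neg]

lemma weighted_midpoint_eq (hint : t + l₀ • a = l₁ • b) (h₀ : 0 < l₀) (h₁ : 0 < l₁)
    {c : ℝ} (hc : c ≠ 0) :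
    (l₁ * c / (l₁ * c + l₀ * c)) • (t + (l₀ * c / c) • (a + b)) = l₁ • b := by
  have hsum : t + l₀ • (a + b) = (l₁ + l₀) • b := by
    rw [eq_sub_of_add_eq hint]; module
  rw [mul_div_cancel_right₀ _ hc, hsum, smul_smul, ← add_mul, mul_div_mul_right _ _ hc,
    div_mul_cancel₀ _ (by positivity)]

end IntersectingRays

theorem stmt_6_general (a b t : E3) (hab : cross3 a b ≠ 0)
    (l₀ l₁ : ℝ) (h₀ : 0 < l₀) (h₁ : 0 < l₁) (hint : t + l₀ • a = l₁ • b) :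
    (‖cross3 a t‖ / (‖cross3 a t‖ + ‖cross3 b t‖)) •
      (t + (‖cross3 b t‖ / ‖cross3 a b‖) • (a + b)) = l₁ • b := by
  rw [cross3_left_of_add_smul_eq hint, cross3_right_of_add_smul_eq hint, norm_smul, norm_smul,
    Real.norm_of_nonneg h₀.le, Real.norm_of_nonneg h₁.le]
  exact weighted_midpoint_eq hint h₀ h₁ (norm_ne_zero_iff.mpr hab)

theorem stmt_6 (a b t : E3) (ha : ‖a‖ = 1) (hb : ‖b‖ = 1) (hab : cross3 a b ≠ 0)
    (hat : cross3 a t ≠ 0) (hbt : cross3 b t ≠ 0)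
    (l₀ l₁ : ℝ) (h₀ : 0 < l₀) (h₁ : 0 < l₁) (hint : t + l₀ • a = l₁ • b) :
    (‖cross3 a t‖ / (‖cross3 a t‖ + ‖cross3 b t‖)) •
      (t + (‖cross3 b t‖ / ‖cross3 a b‖) • (a + b)) = l₁ • b :=
  stmt_6_general a b t hab l₀ l₁ h₀ h₁ hint
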